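/- arXiv:1212.3449 — 7 statements merged into one kernel-verified Lean document; each statement's English description precedes it below -/
import Mathlib

section
/- Let d_k denote the k-th base-4 digit of the Stoneham number α_{2,3} = ∑_{n≥1} 1/(3^n·2^{3^n}). Then for every integer n ≥ 0, the sum ∑_{k=K}^{K+3^n-1} i^{d_k}, where K = 3(3^n+1)/2 and i = e^{πi/2} is the imaginary unit, equals −i if n is odd and equals −1 if n is even. -/
/-- The Stoneham number `α_{b,c} = ∑_{n≥1} 1/(c^n · b^(c^n))`. -/
noncomputable def stoneham (b c : ℕ) : ℝ :=
  ∑' n : ℕ, 1 / ((c : ℝ) ^ (n + 1) * (b : ℝ) ^ (c ^ (n + 1)))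

/-- The `k`-th base-`b` digit of a real number `x ∈ [0,1)`:
`digit b x k = ⌊x · b^k⌋ mod b`. -/
noncomputable def digit (b : ℕ) (x : ℝ) (k : ℕ) : ℕ :=
  (⌊x * (b : ℝ) ^ k⌋ % (b : ℤ)).toNat

/-!
For `3 ^ (n + 1) ≤ j < 3 ^ (n + 2)` only the first `n + 1` terms of `α = stoneham 2 3` contribute
to the integer part of `2 ^ j * α`, which is therefore `H_j / 3 ^ (n + 1)` for an explicit integer
`H_j = stonehamHead n j` with `H_(j+1) = 2 * H_j`. Hence the base-4 digits in the block are
`d_(K+t) = ⌊4 r_t / 3 ^ (n + 1)⌋` with `r_t = 4 ^ t * B mod 3 ^ (n + 1)` and `B ≡ 2 (mod 3)`.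
Since `4 = 1 + 3` has order `3 ^ n` modulo `3 ^ (n + 1)`, the `r_t` with `t < 3 ^ n` run exactly
once through the residues `3 v + 2 < 3 ^ (n + 1)`, so the sum only depends on how many of these
fall into each quarter of `[0, 3 ^ (n + 1))`, which is governed by `3 ^ n mod 4`.
-/

open Finset Complex

lemma Nat.mul_div_mod_eq_mul_mod_div (b x N : ℕ) (hN : 0 < N) :
    b * x / N % b = b * (x % N) / N := by
  rcases b.eq_zero_or_pos with rfl | hb
  · simp
  have hsplit : b * x = b * (x % N) + N * (b * (x / N)) := by
    conv_lhs => rw [← Nat.mod_add_div x N]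
    ring
  rw [hsplit, Nat.add_mul_div_left _ _ hN, Nat.add_mul_mod_self_left,
    Nat.mod_eq_of_lt (Nat.div_lt_of_lt_mul (by nlinarith [Nat.mod_lt x hN]))]

lemma Int.floor_natCast_div_add {W N : ℕ} {ε : ℝ} (hN : 0 < N) (hε₀ : 0 ≤ ε)
    (hε : ε * N < 1) :
    ⌊(W : ℝ) / N + ε⌋ = ((W / N : ℕ) : ℤ) := by
  have hN' : (0 : ℝ) < N := by exact_mod_cast hN
  have hW : (W : ℝ) = N * (W / N : ℕ) + (W % N : ℕ) := by
    exact_mod_cast (Nat.div_add_mod W N).symm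
  have hr : ((W % N : ℕ) : ℝ) + 1 ≤ N := by exact_mod_cast Nat.mod_lt W hN
  have hfrac : ((W % N : ℕ) : ℝ) / N + ε < 1 := by
    rw [div_add' _ _ _ hN'.ne', div_lt_one hN']
    linarith
  rw [Int.floor_eq_iff, hW, add_div, mul_div_cancel_left₀ _ hN'.ne', Int.cast_natCast]
  constructor <;> linarith [show (0 : ℝ) ≤ (W % N : ℕ) / N by positivity]

lemma summable_and_tsum_le_two_mul {f : ℕ → ℝ} (hf₀ : ∀ m, 0 ≤ f m)
    (hf : ∀ m, f (m + 1) ≤ f m / 2) : Summable f ∧ ∑' m, f m ≤ 2 * f 0 := by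
  have hgeom (m : ℕ) : f m ≤ f 0 * (1 / 2) ^ m := by
    induction m with
    | zero => simp
    | succ m ih => rw [pow_succ]; linarith [hf m]
  have hsum : Summable f := summable_geometric_two.mul_left (f 0) |>.of_nonneg_of_le hf₀ hgeom
  refine ⟨hsum, ?_⟩
  calc ∑' m, f m ≤ ∑' m, f 0 * (1 / 2) ^ m :=
        hsum.tsum_le_tsum hgeom (summable_geometric_two.mul_left _)
    _ = 2 * f 0 := by rw [tsum_mul_left, tsum_geometric_two, mul_comm]

noncomputable def stonehamTerm (m : ℕ) : ℝ := 1 / (3 ^ (m + 1) * 2 ^ 3 ^ (m + 1))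

lemma stoneham_two_three : stoneham 2 3 = ∑' m, stonehamTerm m := by
  simp [stoneham, stonehamTerm]

lemma stonehamTerm_nonneg (m : ℕ) : 0 ≤ stonehamTerm m := by
  unfold stonehamTerm; positivity

lemma stonehamTerm_succ_le (m : ℕ) : stonehamTerm (m + 1) ≤ stonehamTerm m / 2 := by
  have key : 2 * (3 ^ (m + 1) * 2 ^ 3 ^ (m + 1)) ≤ 3 ^ (m + 1 + 1) * 2 ^ 3 ^ (m + 1 + 1) := by
    rw [pow_succ 3 (m + 1), mul_comm _ 3, mul_assoc]
    gcongr <;> omega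
  rw [stonehamTerm, stonehamTerm, div_div, one_div_le_one_div (by positivity) (by positivity),
    mul_comm]
  exact_mod_cast key

-- `j - 3 ^ (m + 1)` truncates, so this is only the intended numerator when `3 ^ (n + 1) ≤ j`.
def stonehamHead (n j : ℕ) : ℕ := ∑ m ∈ range (n + 1), 2 ^ (j - 3 ^ (m + 1)) * 3 ^ (n - m)

lemma stonehamHead_add {n j : ℕ} (h : 3 ^ (n + 1) ≤ j) (s : ℕ) :
    stonehamHead n (j + s) = 2 ^ s * stonehamHead n j := by
  rw [stonehamHead, stonehamHead, mul_sum]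
  refine sum_congr rfl fun m hm ↦ ?_
  have : 3 ^ (m + 1) ≤ j := (Nat.pow_le_pow_right three_pos (by simpa using hm)).trans h
  rw [show j + s - 3 ^ (m + 1) = j - 3 ^ (m + 1) + s by omega, pow_add]
  ring

lemma stonehamHead_mod_three (n : ℕ) : stonehamHead n (3 ^ (n + 1) + 1) % 3 = 2 := by
  obtain ⟨c, hc⟩ : 3 ∣ ∑ m ∈ range n, 2 ^ (3 ^ (n + 1) + 1 - 3 ^ (m + 1)) * 3 ^ (n - m) :=
    dvd_sum fun m hm ↦ (dvd_pow_self 3 (by simp at hm; omega)).mul_left _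
  rw [stonehamHead, sum_range_succ, hc]
  simp

lemma sum_range_stonehamTerm_mul_two_pow {n j : ℕ} (h : 3 ^ (n + 1) ≤ j) :
    (∑ m ∈ range (n + 1), stonehamTerm m) * 2 ^ j = stonehamHead n j / 3 ^ (n + 1) := by
  rw [sum_mul, stonehamHead, Nat.cast_sum, sum_div]
  refine sum_congr rfl fun m hm ↦ ?_
  have hm : m ≤ n := by simpa [Nat.lt_succ_iff] using hm
  have hj : (2 : ℝ) ^ j = 2 ^ (j - 3 ^ (m + 1)) * 2 ^ 3 ^ (m + 1) := by
    have : 3 ^ (m + 1) ≤ j := (Nat.pow_le_pow_right three_pos (by omega : m + 1 ≤ n + 1)).trans h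
    rw [← pow_add, Nat.sub_add_cancel this]
  have h3 : (3 : ℝ) ^ (n + 1) = 3 ^ (n - m) * 3 ^ (m + 1) := by
    rw [← pow_add]; congr 1; omega
  rw [stonehamTerm, hj, h3]
  push_cast
  field_simp

lemma tsum_stonehamTerm_tail_mul_lt {n j : ℕ} (h : j < 3 ^ (n + 2)) :
    (∑' i, stonehamTerm (i + (n + 1))) * 2 ^ j * 3 ^ (n + 1) < 1 := by
  have htail := (summable_and_tsum_le_two_mul (fun i ↦ stonehamTerm_nonneg (i + (n + 1)))
    fun i ↦ by simpa [add_right_comm] using stonehamTerm_succ_le (i + (n + 1))).2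
  have hj : (2 : ℝ) ^ (j + 1) ≤ 2 ^ 3 ^ (n + 2) := pow_le_pow_right₀ one_le_two h
  calc (∑' i, stonehamTerm (i + (n + 1))) * 2 ^ j * 3 ^ (n + 1)
      ≤ 2 * stonehamTerm (n + 1) * 2 ^ j * 3 ^ (n + 1) := by gcongr; simpa using htail
    _ = 2 ^ (j + 1) / 2 ^ 3 ^ (n + 2) / 3 := by
        rw [stonehamTerm, pow_succ, pow_succ 3 (n + 1)]; field_simp; ring
    _ ≤ 1 / 3 := by gcongr; exact div_le_one_of_le₀ hj (by positivity)
    _ < 1 := by norm_num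

lemma floor_stoneham_two_three_mul_two_pow {n j : ℕ} (h₁ : 3 ^ (n + 1) ≤ j)
    (h₂ : j < 3 ^ (n + 2)) :
    ⌊stoneham 2 3 * 2 ^ j⌋ = ((stonehamHead n j / 3 ^ (n + 1) : ℕ) : ℤ) := by
  have hsum := (summable_and_tsum_le_two_mul stonehamTerm_nonneg stonehamTerm_succ_le).1
  rw [stoneham_two_three, ← hsum.sum_add_tsum_nat_add (n + 1), add_mul,
    sum_range_stonehamTerm_mul_two_pow h₁]
  exact_mod_cast Int.floor_natCast_div_add (by positivity)
    (mul_nonneg (tsum_nonneg fun i ↦ stonehamTerm_nonneg _) (by positivity))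
    (by exact_mod_cast tsum_stonehamTerm_tail_mul_lt h₂)

lemma digit_four_stoneham_two_three {n k : ℕ} (h₁ : 3 ^ (n + 1) ≤ 2 * k)
    (h₂ : 2 * k < 3 ^ (n + 2)) :
    digit 4 (stoneham 2 3) k = stonehamHead n (2 * k) / 3 ^ (n + 1) % 4 := by
  rw [digit, Nat.cast_ofNat, show (4 : ℝ) ^ k = 2 ^ (2 * k) by rw [pow_mul]; norm_num,
    floor_stoneham_two_three_mul_two_pow h₁ h₂]
  omega

lemma four_pow_mul_mod_three_pow_mod_three (t B n : ℕ) :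
    4 ^ t * B % 3 ^ (n + 1) % 3 = B % 3 := by
  rw [Nat.mod_mod_of_dvd _ (dvd_pow_self 3 n.succ_ne_zero), Nat.mul_mod, Nat.pow_mod]
  simp

lemma injOn_four_pow_mul_mod {n B : ℕ} (hB : B.Coprime 3) :
    Set.InjOn (fun t ↦ 4 ^ t * B % 3 ^ (n + 1)) (Set.Iio (3 ^ n)) := by
  intro t₁ ht₁ t₂ ht₂ h
  have hunit : IsUnit (B : ZMod (3 ^ (n + 1))) :=
    (ZMod.isUnit_iff_coprime B _).mpr (hB.pow_right _)
  have horder : orderOf (4 : ZMod (3 ^ (n + 1))) = 3 ^ n := by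
    rw [show (4 : ZMod (3 ^ (n + 1))) = 1 + 3 by norm_num]
    exact ZMod.orderOf_one_add_prime Nat.prime_three (by norm_num) n
  have hpow : (4 : ZMod (3 ^ (n + 1))) ^ t₁ = 4 ^ t₂ := by
    have := (ZMod.natCast_eq_natCast_iff' _ _ _).mpr h
    push_cast at this
    exact hunit.mul_left_inj.mp this
  exact pow_injOn_Iio_orderOf (by rwa [horder]) (by rwa [horder]) hpow

lemma sum_range_four_pow_mul_mod {α : Type*} [AddCommMonoid α] (g : ℕ → α) {n B : ℕ}
    (hB : B % 3 = 2) :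
    ∑ t ∈ range (3 ^ n), g (4 ^ t * B % 3 ^ (n + 1)) = ∑ v ∈ range (3 ^ n), g (3 * v + 2) := by
  have hres (t : ℕ) : 4 ^ t * B % 3 ^ (n + 1) % 3 = 2 := by
    rw [four_pow_mul_mod_three_pow_mod_three, hB]
  have hcop : B.Coprime 3 :=
    ((Nat.Prime.coprime_iff_not_dvd Nat.prime_three).mpr (by omega)).symm
  have hmaps :
      Set.MapsTo (fun t ↦ 4 ^ t * B % 3 ^ (n + 1) / 3) (range (3 ^ n)) (range (3 ^ n)) := by
    intro t _
    have := Nat.mod_lt (4 ^ t * B) (pow_pos three_pos (n + 1))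
    simp only [coe_range, Set.mem_Iio, pow_succ] at this ⊢
    omega
  have hinj : Set.InjOn (fun t ↦ 4 ^ t * B % 3 ^ (n + 1) / 3) (range (3 ^ n)) := by
    intro t₁ ht₁ t₂ ht₂ h
    refine injOn_four_pow_mul_mod hcop (by simpa using ht₁) (by simpa using ht₂) ?_
    have := hres t₁; have := hres t₂; simp only at h ⊢; omega
  refine sum_nbij _ hmaps hinj (surjOn_of_injOn_of_card_le _ hmaps hinj le_rfl) fun t _ ↦ ?_
  have := hres t
  congr 1
  omega

lemma sum_range_I_pow_of_blocks (f : ℕ → ℕ) {c₁ c₂ c₃ M : ℕ} (h₁ : c₁ ≤ c₂) (h₂ : c₂ ≤ c₃)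
    (h₃ : c₃ ≤ M) (hf₀ : ∀ v < c₁, f v = 0) (hf₁ : ∀ v ∈ Ico c₁ c₂, f v = 1)
    (hf₂ : ∀ v ∈ Ico c₂ c₃, f v = 2) (hf₃ : ∀ v ∈ Ico c₃ M, f v = 3) :
    ∑ v ∈ range M, I ^ f v = c₁ + (c₂ - c₁ : ℕ) * I - (c₃ - c₂ : ℕ) - (M - c₃ : ℕ) * I := by
  have hconst (a b j : ℕ) (hf : ∀ v ∈ Ico a b, f v = j) :
      ∑ v ∈ Ico a b, I ^ f v = (b - a : ℕ) * I ^ j := by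
    rw [sum_congr rfl fun v hv ↦ by rw [hf v hv], sum_const, Nat.card_Ico, nsmul_eq_mul]
  rw [range_eq_Ico, ← sum_Ico_consecutive _ (Nat.zero_le c₁) (h₁.trans (h₂.trans h₃)),
    ← sum_Ico_consecutive _ h₁ (h₂.trans h₃), ← sum_Ico_consecutive _ h₂ h₃,
    hconst 0 c₁ 0 fun v hv ↦ hf₀ v (mem_Ico.mp hv).2, hconst _ _ 1 hf₁, hconst _ _ 2 hf₂,
    hconst _ _ 3 hf₃]
  simp only [Nat.sub_zero, pow_zero, pow_one, I_sq, pow_three, I_mul_I]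
  ring

-- `4 * (3 * v + 2) / (3 * M) < j` iff `v < (j * M + 1) / 4`, which gives the block ends.
lemma sum_range_I_pow_div_of_mod_four_eq_one {M : ℕ} (hM : M % 4 = 1) :
    ∑ v ∈ range M, I ^ (4 * (3 * v + 2) / (3 * M)) = -1 := by
  obtain ⟨a, rfl⟩ : ∃ a, M = 4 * a + 1 := ⟨M / 4, by omega⟩
  rw [sum_range_I_pow_of_blocks _ (c₁ := a) (c₂ := 2 * a) (c₃ := 3 * a + 1) (by omega) (by omega)
    (by omega)]
  · rw [show 2 * a - a = a by omega, show 3 * a + 1 - 2 * a = a + 1 by omega,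
      show 4 * a + 1 - (3 * a + 1) = a by omega]
    push_cast
    ring
  all_goals
    intro v hv
    try simp only [mem_Ico] at hv
    exact Nat.div_eq_of_lt_le (by omega) (by omega)

lemma sum_range_I_pow_div_of_mod_four_eq_three {M : ℕ} (hM : M % 4 = 3) :
    ∑ v ∈ range M, I ^ (4 * (3 * v + 2) / (3 * M)) = -I := by
  obtain ⟨a, rfl⟩ : ∃ a, M = 4 * a + 3 := ⟨M / 4, by omega⟩
  rw [sum_range_I_pow_of_blocks _ (c₁ := a + 1) (c₂ := 2 * a + 1) (c₃ := 3 * a + 2) (by omega)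
    (by omega) (by omega)]
  · rw [show 2 * a + 1 - (a + 1) = a by omega, show 3 * a + 2 - (2 * a + 1) = a + 1 by omega,
      show 4 * a + 3 - (3 * a + 2) = a + 1 by omega]
    push_cast
    ring
  all_goals
    intro v hv
    try simp only [mem_Ico] at hv
    exact Nat.div_eq_of_lt_le (by omega) (by omega)

lemma three_pow_mod_four (n : ℕ) : 3 ^ n % 4 = if Odd n then 3 else 1 := by
  obtain ⟨m, rfl | rfl⟩ := Nat.even_or_odd' n
  · simp [pow_mul, Nat.pow_mod]
  · simp [pow_succ, pow_mul, Nat.mul_mod, Nat.pow_mod]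

lemma sum_range_I_pow_div_three_pow (n : ℕ) :
    ∑ v ∈ range (3 ^ n), I ^ (4 * (3 * v + 2) / 3 ^ (n + 1)) = if Odd n then -I else -1 := by
  rw [pow_succ']
  split_ifs with hn
  · exact sum_range_I_pow_div_of_mod_four_eq_three (by simpa [hn] using three_pow_mod_four n)
  · exact sum_range_I_pow_div_of_mod_four_eq_one (by simpa [hn] using three_pow_mod_four n)

theorem stmt0 (n : ℕ) :
    ∑ k ∈ Finset.Icc (3 * (3 ^ n + 1) / 2) (3 * (3 ^ n + 1) / 2 + 3 ^ n - 1),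
      Complex.I ^ (digit 4 (stoneham 2 3) k) =
    if Odd n then -Complex.I else -1 := by
  set K := 3 * (3 ^ n + 1) / 2
  have hK : 2 * K = 3 ^ (n + 1) + 3 := by
    have : 3 ^ n % 2 = 1 := Nat.odd_iff.mp (Odd.pow (by decide))
    omega
  set B := stonehamHead n (3 ^ (n + 1) + 1)
  have hdigit (t : ℕ) (ht : t < 3 ^ n) :
      digit 4 (stoneham 2 3) (K + t) = 4 * (4 ^ t * B % 3 ^ (n + 1)) / 3 ^ (n + 1) := by
    have h3 : 3 ^ (n + 1) = 3 * 3 ^ n := by ring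
    have h9 : 3 ^ (n + 2) = 9 * 3 ^ n := by ring
    rw [digit_four_stoneham_two_three (n := n) (by omega) (by omega),
      show 2 * (K + t) = 3 ^ (n + 1) + 1 + 2 * (t + 1) by omega, stonehamHead_add (by omega),
      pow_mul, ← Nat.mul_div_mod_eq_mul_mod_div _ _ _ (by positivity), ← mul_assoc, ← pow_succ']
    rfl
  rw [← Ico_add_one_right_eq_Icc,
    show K + 3 ^ n - 1 + 1 = K + 3 ^ n by have := Nat.one_le_pow n 3 three_pos; omega,
    sum_Ico_eq_sum_range, Nat.add_sub_cancel_left,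
    sum_congr rfl fun t ht ↦ by rw [hdigit t (mem_range.mp ht)],
    sum_range_four_pow_mul_mod (fun u ↦ I ^ (4 * u / 3 ^ (n + 1))) (stonehamHead_mod_three n)]
  exact sum_range_I_pow_div_three_pow n
end

section
/- Let a_k denote the k-th base-3 digit of the Stoneham number α_{3,5} = ∑_{n≥1} 1/(5^n·3^{5^n}). Then for every integer n ≥ 0 and every j with 1 ≤ j ≤ 4·5^n, setting k = 5^{n+1} + j, one has a_k = a_{4·5^n + k} = a_{8·5^n + k} = a_{12·5^n + k} = a_{16·5^n + k}. -/
open Finset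
open scoped Nat

theorem Int.floor_natCast_div_add_of_lt {K : Type*} [Field K] [LinearOrder K] [IsOrderedRing K]
    [FloorRing K] {X M : ℕ} {ε : K} (h₀ : 0 ≤ ε) (h₁ : ε < (M : K)⁻¹) :
    ⌊(X : K) / M + ε⌋ = ((X / M : ℕ) : ℤ) := by
  have hM : (0 : K) < M := inv_pos.mp (h₀.trans_lt h₁)
  have hε : ⌊(M : K) * ε⌋ = 0 :=
    Int.floor_eq_zero_iff.mpr ⟨by positivity, (lt_div_iff₀' hM).mp (by rwa [one_div])⟩
  rw [show (X : K) / M + ε = (X + M * ε) / M by field_simp, Int.floor_div_natCast,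
    Int.floor_natCast_add, hε, add_zero]
  norm_cast

theorem digit_eq_of_floor_eq {b k q : ℕ} {x : ℝ} (h : ⌊x * (b : ℝ) ^ k⌋ = q) :
    digit b x k = q % b := by
  rw [digit, h]
  norm_cast

theorem Nat.div_mod_eq_of_modEq {X Y M b : ℕ} (h : X ≡ Y [MOD M * b]) :
    X / M % b = Y / M % b := by
  rw [← Nat.mod_mul_right_div_self, ← Nat.mod_mul_right_div_self, h]

theorem Nat.pow_add_totient_modEq {b m e : ℕ} (h : b.Coprime m) (he : 1 ≤ e) :
    b ^ (e + φ m) ≡ b ^ e [MOD b * m] := by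
  obtain ⟨e, rfl⟩ := Nat.exists_eq_add_of_le' he
  have := ((Nat.ModEq.pow_totient h).mul_left (b ^ e)).mul_left' b
  rwa [mul_one, ← mul_assoc, ← pow_succ', ← pow_add] at this

namespace Stoneham

variable {b c : ℕ}

noncomputable def term (b c m : ℕ) : ℝ := 1 / ((c : ℝ) ^ (m + 1) * (b : ℝ) ^ (c ^ (m + 1)))

def partialNumerator (b c N : ℕ) : ℕ :=
  ∑ m ∈ range N, c ^ (N - 1 - m) * b ^ (c ^ N - c ^ (m + 1))

theorem stoneham_eq_tsum_term : stoneham b c = ∑' m, term b c m := rfl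

theorem pow_mul_term_add_le (hb : 1 < b) (hc : 1 < c) {k N : ℕ} (hk : k ≤ c ^ (N + 1)) (i : ℕ) :
    (b : ℝ) ^ k * term b c (i + N) ≤ ((c : ℝ) ^ (N + 1))⁻¹ * (((b : ℝ) * c)⁻¹) ^ i := by
  have hexp : k + i ≤ c ^ (i + N + 1) := by
    have hi : i < c ^ i := Nat.lt_pow_self hc
    have hcN : 1 ≤ c ^ (N + 1) := Nat.one_le_pow _ _ (by omega)
    calc k + i ≤ c ^ (N + 1) * (i + 1) := by nlinarith
      _ ≤ c ^ (N + 1) * c ^ i := by gcongr; omega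
      _ = c ^ (i + N + 1) := by ring
  have hb' : (1 : ℝ) ≤ b := by exact_mod_cast hb.le
  have hpow : (b : ℝ) ^ (k + i) ≤ (b : ℝ) ^ (c ^ (i + N + 1)) := pow_le_pow_right₀ hb' hexp
  have hrhs : ((c : ℝ) ^ (N + 1))⁻¹ * (((b : ℝ) * c)⁻¹) ^ i =
      1 / ((c : ℝ) ^ (N + 1) * (b * c) ^ i) := by
    rw [inv_pow, ← mul_inv, one_div]
  rw [term, mul_one_div, hrhs, div_le_div_iff₀ (by positivity) (by positivity)]
  calc (b : ℝ) ^ k * ((c : ℝ) ^ (N + 1) * (b * c) ^ i) = c ^ (i + N + 1) * b ^ (k + i) := by ring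
    _ ≤ c ^ (i + N + 1) * b ^ c ^ (i + N + 1) := by gcongr
    _ = 1 * (c ^ (i + N + 1) * b ^ c ^ (i + N + 1)) := (one_mul _).symm

theorem inv_natCast_mul_lt_one (hb : 1 < b) (hc : 1 < c) : ((b : ℝ) * c)⁻¹ < 1 :=
  inv_lt_one_of_one_lt₀ (one_lt_mul_of_lt_of_le (by exact_mod_cast hb) (by exact_mod_cast hc.le))

theorem summable_term (hb : 1 < b) (hc : 1 < c) : Summable (term b c) := by
  refine Summable.of_nonneg_of_le (fun m => by unfold term; positivity) (fun m => ?_)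
    ((summable_geometric_of_lt_one (by positivity) (inv_natCast_mul_lt_one hb hc)).mul_left
      (c : ℝ)⁻¹)
  simpa using pow_mul_term_add_le hb hc (k := 0) (N := 0) (by positivity) m

theorem pow_mul_tsum_term_add_lt (hb : 1 < b) (hc : 1 < c) {k N : ℕ} (hk : k ≤ c ^ (N + 1)) :
    (b : ℝ) ^ k * ∑' i, term b c (i + N) < ((c : ℝ) ^ N)⁻¹ := by
  set r : ℝ := ((b : ℝ) * c)⁻¹
  have hr : r < 1 := inv_natCast_mul_lt_one hb hc
  have hb' : (2 : ℝ) ≤ b := by exact_mod_cast hb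
  have hc' : (2 : ℝ) ≤ c := by exact_mod_cast hc
  calc (b : ℝ) ^ k * ∑' i, term b c (i + N) = ∑' i, (b : ℝ) ^ k * term b c (i + N) :=
        tsum_mul_left.symm
    _ ≤ ∑' i, ((c : ℝ) ^ (N + 1))⁻¹ * r ^ i :=
      Summable.tsum_le_tsum (pow_mul_term_add_le hb hc hk)
        (((summable_nat_add_iff N).2 (summable_term hb hc)).mul_left _)
        ((summable_geometric_of_lt_one (by positivity) hr).mul_left _)
    _ = ((c : ℝ) ^ N)⁻¹ * (c * (1 - r))⁻¹ := by
      rw [tsum_mul_left, tsum_geometric_of_lt_one (by positivity) hr, pow_succ, mul_inv, mul_inv,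
        mul_assoc]
    _ < ((c : ℝ) ^ N)⁻¹ := by
      refine mul_lt_of_lt_one_right (by positivity) (inv_lt_one_of_one_lt₀ ?_)
      have : r ≤ 4⁻¹ := inv_anti₀ (by norm_num) (by nlinarith)
      nlinarith

theorem sum_range_term (hb : 0 < b) (hc : 0 < c) (N : ℕ) :
    ∑ m ∈ range N, term b c m = partialNumerator b c N / ((c : ℝ) ^ N * (b : ℝ) ^ c ^ N) := by
  rw [partialNumerator]
  push_cast
  rw [sum_div]
  refine sum_congr rfl fun m hm => ?_
  have hmN : m + 1 ≤ N := mem_range.mp hm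
  have hcN : (c : ℝ) ^ N = c ^ (N - 1 - m) * c ^ (m + 1) := by rw [← pow_add]; congr 1; omega
  have hbN : (b : ℝ) ^ c ^ N = b ^ (c ^ N - c ^ (m + 1)) * b ^ c ^ (m + 1) := by
    rw [← pow_add, Nat.sub_add_cancel (Nat.pow_le_pow_right hc hmN)]
  have : (0 : ℝ) < c := by exact_mod_cast hc
  have : (0 : ℝ) < b := by exact_mod_cast hb
  rw [term, hcN, hbN]
  field_simp

theorem stoneham_mul_pow (hb : 1 < b) (hc : 1 < c) {k N : ℕ} (hk : c ^ N ≤ k) :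
    stoneham b c * (b : ℝ) ^ k =
      ((b ^ (k - c ^ N) * partialNumerator b c N : ℕ) : ℝ) / (c : ℝ) ^ N +
        (b : ℝ) ^ k * ∑' i, term b c (i + N) := by
  have hbk : (b : ℝ) ^ k = b ^ (k - c ^ N) * b ^ c ^ N := by rw [← pow_add, Nat.sub_add_cancel hk]
  have : (0 : ℝ) < c := by positivity
  have : (0 : ℝ) < b := by positivity
  rw [stoneham_eq_tsum_term, ← (summable_term hb hc).sum_add_tsum_nat_add N, add_mul,
    mul_comm _ ((b : ℝ) ^ k), sum_range_term (by omega) (by omega), hbk]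
  push_cast
  field_simp

theorem digit_stoneham (hb : 1 < b) (hc : 1 < c) {k N : ℕ} (hk₁ : c ^ N ≤ k)
    (hk₂ : k ≤ c ^ (N + 1)) :
    digit b (stoneham b c) k = b ^ (k - c ^ N) * partialNumerator b c N / c ^ N % b := by
  refine digit_eq_of_floor_eq ?_
  rw [stoneham_mul_pow hb hc hk₁, ← Nat.cast_pow c N]
  refine Int.floor_natCast_div_add_of_lt (by unfold term; positivity) ?_
  exact_mod_cast pow_mul_tsum_term_add_lt hb hc hk₂

theorem digit_stoneham_add_totient (hb : 1 < b) (hc : 1 < c) (hbc : b.Coprime c) {k N : ℕ}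
    (hk₁ : c ^ N < k) (hk₂ : k + φ (c ^ N) ≤ c ^ (N + 1)) :
    digit b (stoneham b c) (k + φ (c ^ N)) = digit b (stoneham b c) k := by
  rw [digit_stoneham hb hc (by omega) hk₂, digit_stoneham hb hc hk₁.le (by omega),
    show k + φ (c ^ N) - c ^ N = k - c ^ N + φ (c ^ N) by omega]
  refine Nat.div_mod_eq_of_modEq ?_
  rw [mul_comm (c ^ N)]
  exact (Nat.pow_add_totient_modEq (hbc.pow_right N) (by omega)).mul_right _

end Stoneham

theorem stmt3 (n : ℕ) (j : ℕ) (hj1 : 1 ≤ j) (hj2 : j ≤ 4 * 5 ^ n) :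
    digit 3 (stoneham 3 5) (5 ^ (n + 1) + j) =
      digit 3 (stoneham 3 5) (4 * 5 ^ n + (5 ^ (n + 1) + j)) ∧
    digit 3 (stoneham 3 5) (5 ^ (n + 1) + j) =
      digit 3 (stoneham 3 5) (8 * 5 ^ n + (5 ^ (n + 1) + j)) ∧
    digit 3 (stoneham 3 5) (5 ^ (n + 1) + j) =
      digit 3 (stoneham 3 5) (12 * 5 ^ n + (5 ^ (n + 1) + j)) ∧
    digit 3 (stoneham 3 5) (5 ^ (n + 1) + j) =
      digit 3 (stoneham 3 5) (16 * 5 ^ n + (5 ^ (n + 1) + j)) := by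
  have hφ : φ (5 ^ (n + 1)) = 4 * 5 ^ n :=
    (Nat.totient_prime_pow_succ Nat.prime_five n).trans (mul_comm _ _)
  set d : ℕ → ℕ := digit 3 (stoneham 3 5)
  have hshift : ∀ k, 5 ^ (n + 1) < k → k + 4 * 5 ^ n ≤ 5 ^ (n + 2) → d (4 * 5 ^ n + k) = d k := by
    intro k hk₁ hk₂
    rw [← hφ] at hk₂ ⊢
    rw [add_comm]
    exact Stoneham.digit_stoneham_add_totient (by norm_num) (by norm_num) (by norm_num) hk₁ hk₂
  have h5 : 5 ^ (n + 1) = 5 * 5 ^ n := by ring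
  have h25 : 5 ^ (n + 2) = 25 * 5 ^ n := by ring
  set k := 5 ^ (n + 1) + j
  have h4 := hshift k (by omega) (by omega)
  have h8 : d (8 * 5 ^ n + k) = d k := by
    rw [show 8 * 5 ^ n + k = 4 * 5 ^ n + (4 * 5 ^ n + k) by ring, hshift _ (by omega) (by omega),
      h4]
  have h12 : d (12 * 5 ^ n + k) = d k := by
    rw [show 12 * 5 ^ n + k = 4 * 5 ^ n + (8 * 5 ^ n + k) by ring, hshift _ (by omega) (by omega),
      h8]
  have h16 : d (16 * 5 ^ n + k) = d k := by
    rw [show 16 * 5 ^ n + k = 4 * 5 ^ n + (12 * 5 ^ n + k) by ring, hshift _ (by omega) (by omega),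
      h12]
  exact ⟨h4.symm, h8.symm, h12.symm, h16.symm⟩
end

section
/- Let p be an odd prime, m ≥ 1 an integer, b ≥ 2 an integer that is a primitive root modulo p², and a an integer with 1 ≤ a < p^m and gcd(a,p) = 1. Let n = φ(p^m). Then the base-b digit sequence of a/p^m is a cyclic shift of that of 1/p^m: there exists an integer s with 0 ≤ s < n such that for every i ≥ 1, digit_b(a/p^m, i) = digit_b(1/p^m, ((i − 1 + s) mod n) + 1). -/
/-!
If `b` generates `(ℤ/p²)ˣ`, it generates `(ℤ/p^m)ˣ` for all `m ≥ 1`: its image generates `(ℤ/p)ˣ`,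
so `p - 1` divides its order, and writing `b^(p-1) = 1 + p c`, primitivity modulo `p²` forces
`p ∤ c`, so `b^(p-1)` has order `p^(m-1)` modulo `p^m`. Hence `a ≡ b^s (mod p^m)` for some
`s < φ(p^m)`. The `i`-th digit of `c / N` is `⌊c b^i / N⌋ mod b`, which depends only on
`c b^i mod N b`, and `a b^i ≡ b^(i+s) ≡ b^j (mod N b)` for `i, j ≥ 1` with `j ≡ i + s (mod φ(p^m))`.
-/

namespace ZMod

section PrimitiveRoot

variable {N : ℕ} [NeZero N] {x : ZMod N}

lemma isUnit_of_orderOf_eq_totient (h : orderOf x = N.totient) : IsUnit x :=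
  IsUnit.of_pow_eq_one (pow_orderOf_eq_one x) (h ▸ (Nat.totient_pos.2 N.pos_of_neZero).ne')

lemma zpowers_unit_eq_top_of_orderOf_eq_totient (h : orderOf x = N.totient) :
    Subgroup.zpowers (isUnit_of_orderOf_eq_totient h).unit = ⊤ := by
  apply Subgroup.eq_top_of_card_eq
  rw [Nat.card_zpowers, ← orderOf_units, IsUnit.unit_spec, h, Nat.card_eq_fintype_card,
    card_units_eq_totient]

lemma exists_pow_eq_of_orderOf_eq_totient (h : orderOf x = N.totient) {y : ZMod N}
    (hy : IsUnit y) : ∃ s < N.totient, x ^ s = y := by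
  obtain ⟨k, hk⟩ : hy.unit ∈ Submonoid.powers (isUnit_of_orderOf_eq_totient h).unit := by
    rw [mem_powers_iff_mem_zpowers, zpowers_unit_eq_top_of_orderOf_eq_totient h]
    exact Subgroup.mem_top _
  refine ⟨k % N.totient, Nat.mod_lt _ (Nat.totient_pos.2 N.pos_of_neZero), ?_⟩
  rw [← h, pow_mod_orderOf]
  simpa using congrArg Units.val hk

lemma orderOf_natCast_eq_totient_of_dvd {b M : ℕ} (hMN : M ∣ N)
    (h : orderOf (b : ZMod N) = N.totient) : orderOf (b : ZMod M) = M.totient := by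
  have : NeZero M := ⟨fun hM => NeZero.ne N (Nat.eq_zero_of_zero_dvd (hM ▸ hMN))⟩
  set u := (isUnit_of_orderOf_eq_totient h).unit
  have hu : ((unitsMap hMN u : (ZMod M)ˣ) : ZMod M) = b := by
    simp [u, unitsMap_val, cast_natCast hMN]
  have htop : Subgroup.zpowers (unitsMap hMN u) = ⊤ := by
    rw [← MonoidHom.map_zpowers, zpowers_unit_eq_top_of_orderOf_eq_totient h,
      ← MonoidHom.range_eq_map, MonoidHom.range_eq_top]
    exact unitsMap_surjective hMN
  rw [← hu, orderOf_units, orderOf_eq_card_of_zpowers_eq_top htop, Nat.card_eq_fintype_card,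
    card_units_eq_totient]

end PrimitiveRoot

lemma orderOf_natCast_eq_pred_of_sq {p b : ℕ} (hp : p.Prime)
    (h : orderOf (b : ZMod (p ^ 2)) = (p ^ 2).totient) : orderOf (b : ZMod p) = p - 1 := by
  have : NeZero p := ⟨hp.ne_zero⟩
  simpa [Nat.totient_prime hp] using
    orderOf_natCast_eq_totient_of_dvd (dvd_pow_self p two_ne_zero) h

lemma exists_pow_prime_sub_one_eq_one_add_mul {p b : ℕ} (hp : p.Prime)
    (h : orderOf (b : ZMod (p ^ 2)) = (p ^ 2).totient) :
    ∃ c : ℤ, ¬ (p : ℤ) ∣ c ∧ (b : ℤ) ^ (p - 1) = 1 + p * c := by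
  obtain ⟨c, hc⟩ : (p : ℤ) ∣ b ^ (p - 1) - 1 := by
    rw [← intCast_zmod_eq_zero_iff_dvd]
    push_cast
    rw [← orderOf_natCast_eq_pred_of_sq hp h, pow_orderOf_eq_one, sub_self]
  refine ⟨c, ?_, by rw [← hc]; ring⟩
  rintro ⟨d, rfl⟩
  have hsq : (b : ZMod (p ^ 2)) ^ (p - 1) = 1 := by
    have := (intCast_zmod_eq_zero_iff_dvd ((b : ℤ) ^ (p - 1) - 1) (p ^ 2)).2
      ⟨d, by rw [hc]; push_cast; ring⟩
    push_cast at this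
    exact sub_eq_zero.1 this
  have hle := Nat.le_of_dvd (Nat.sub_pos_of_lt hp.one_lt) (h ▸ orderOf_dvd_of_pow_eq_one hsq)
  rw [Nat.totient_prime_pow_succ hp, pow_one] at hle
  have h2 := hp.two_le
  have := Nat.mul_le_mul_right (p - 1) h2
  omega

lemma orderOf_natCast_eq_totient_prime_pow {p b : ℕ} (hp : p.Prime) (hp2 : p ≠ 2)
    (h : orderOf (b : ZMod (p ^ 2)) = (p ^ 2).totient) (n : ℕ) :
    orderOf (b : ZMod (p ^ (n + 1))) = (p ^ (n + 1)).totient := by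
  have : NeZero p := ⟨hp.ne_zero⟩
  obtain ⟨c, hc_not_dvd, hc⟩ := exists_pow_prime_sub_one_eq_one_add_mul hp h
  have hpow : orderOf ((b : ZMod (p ^ (n + 1))) ^ (p - 1)) = p ^ n := by
    have hb := congrArg (Int.cast : ℤ → ZMod (p ^ (n + 1))) hc
    push_cast at hb
    rw [hb]
    exact orderOf_one_add_mul_prime hp hp2 c hc_not_dvd n
  have hdvd : p - 1 ∣ orderOf (b : ZMod (p ^ (n + 1))) := by
    simpa [orderOf_natCast_eq_pred_of_sq hp h] using
      orderOf_map_dvd (castHom (dvd_pow_self p n.succ_ne_zero) (ZMod p)).toMonoidHom b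
  rw [orderOf_pow_of_dvd (Nat.sub_ne_zero_of_lt hp.one_lt) hdvd] at hpow
  rw [Nat.totient_prime_pow_succ hp, ← hpow, Nat.div_mul_cancel hdvd]

end ZMod

lemma digit_natCast_div (b c N k : ℕ) :
    digit b ((c : ℝ) / N) k = c * b ^ k / N % b := by
  have h : (c : ℝ) / N * (b : ℝ) ^ k = ((c * b ^ k : ℕ) : ℝ) / N := by push_cast; ring
  rw [digit, h, Int.floor_div_natCast, Int.floor_natCast]
  norm_cast

lemma digit_natCast_div_eq_of_modEq {b c c' N i j : ℕ}
    (h : c * b ^ i ≡ c' * b ^ j [MOD N * b]) :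
    digit b ((c : ℝ) / N) i = digit b ((c' : ℝ) / N) j := by
  rw [digit_natCast_div, digit_natCast_div, ← Nat.mod_mul_right_div_self, h,
    Nat.mod_mul_right_div_self]

lemma digit_natCast_div_eq_digit_one_div {b N a s i : ℕ} (hs : (b : ZMod N) ^ s = a)
    (hi : 1 ≤ i) :
    digit b ((a : ℝ) / N) i = digit b (1 / N) ((i - 1 + s) % orderOf (b : ZMod N) + 1) := by
  obtain ⟨k, rfl⟩ := Nat.exists_eq_add_of_le' hi
  rw [Nat.add_sub_cancel, ← Nat.cast_one (R := ℝ)]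
  apply digit_natCast_div_eq_of_modEq
  have hN : a * b ^ k ≡ 1 * b ^ ((k + s) % orderOf (b : ZMod N)) [MOD N] := by
    rw [← ZMod.natCast_eq_natCast_iff]
    push_cast
    rw [pow_mod_orderOf, ← hs, ← pow_add, one_mul, add_comm]
  simpa only [pow_succ', mul_comm N b, mul_left_comm _ b] using hN.mul_left' b

theorem stmt8_general (p m b a : ℕ) (hp : p.Prime) (hpodd : Odd p) (hm : 1 ≤ m)
    (hroot : orderOf (b : ZMod (p ^ 2)) = Nat.totient (p ^ 2))
    (hap : Nat.Coprime a p) :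
    ∃ s < Nat.totient (p ^ m), ∀ i : ℕ, 1 ≤ i →
      digit b ((a : ℝ) / (p : ℝ) ^ m) i =
        digit b (1 / (p : ℝ) ^ m) ((i - 1 + s) % Nat.totient (p ^ m) + 1) := by
  have : NeZero (p ^ m) := ⟨pow_ne_zero m hp.ne_zero⟩
  have hord : orderOf (b : ZMod (p ^ m)) = (p ^ m).totient := by
    obtain ⟨n, rfl⟩ := Nat.exists_eq_add_of_le' hm
    exact ZMod.orderOf_natCast_eq_totient_prime_pow hp (hpodd.ne_two_of_dvd_nat dvd_rfl) hroot n
  obtain ⟨s, hs, hbs⟩ := ZMod.exists_pow_eq_of_orderOf_eq_totient hord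
    ((ZMod.isUnit_iff_coprime a (p ^ m)).2 (hap.pow_right m))
  refine ⟨s, hs, fun i hi => ?_⟩
  have hshift := digit_natCast_div_eq_digit_one_div hbs hi
  rw [hord] at hshift
  exact_mod_cast hshift

theorem stmt8 (p m b a : ℕ) (hp : p.Prime) (hpodd : Odd p) (hm : 1 ≤ m)
    (hb : 2 ≤ b)
    (hroot : orderOf (b : ZMod (p ^ 2)) = Nat.totient (p ^ 2))
    (ha1 : 1 ≤ a) (ha2 : a < p ^ m) (hap : Nat.Coprime a p) :
    ∃ s < Nat.totient (p ^ m), ∀ i : ℕ, 1 ≤ i →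
      digit b ((a : ℝ) / (p : ℝ) ^ m) i =
        digit b (1 / (p : ℝ) ^ m) ((i - 1 + s) % Nat.totient (p ^ m) + 1) :=
  stmt8_general p m b a hp hpodd hm hroot hap
end

section
/- Let m ≥ 1 be an integer, p an odd prime, and b ≥ 2 an integer coprime to p that is a primitive root modulo p and modulo p². Let a be an integer with 1 ≤ a < p^m and gcd(a,p)=1, and let q_i := ⌊(r_{i−1}·b)/p^m⌋ with r_i := a·b^i mod p^m be given by the base-b algorithm for a/p^m. Then the number of indices j with 1 ≤ j ≤ φ(p^m) and q_j = 0 equals ⌊p^m/b⌋ − ⌊p^{m−1}/b⌋. -/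
/-!
Since `b` generates `(ℤ/p²ℤ)ˣ`, the number `b ^ (p - 1) - 1` has `p`-adic valuation exactly one,
so by lifting the exponent `b ^ ((p - 1) * p ^ s) - 1` has valuation `s + 1`, and `b` is a primitive
root modulo every `p ^ m`. Hence the remainders `r_{j-1} = a * b ^ (j - 1) % p ^ m`,
`1 ≤ j ≤ φ (p ^ m)`, run exactly once through the residues in `[0, p ^ m)` prime to `p`. Moreover
`q_j = 0` iff `r_{j-1} * b < p ^ m` iff `r_{j-1} ≤ p ^ m / b`, because `r * b = p ^ m` is impossible
when `p ∤ r` and `p ∤ b`. Counting the integers in `(0, p ^ m / b]` prime to `p` gives the formula.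
-/

open Finset
open scoped Nat

theorem orderOf_natCast_zmod_dvd_iff {n b d : ℕ} (hb : b ≠ 0) :
    orderOf (b : ZMod n) ∣ d ↔ n ∣ b ^ d - 1 := by
  rw [orderOf_dvd_iff_pow_eq_one, ← ZMod.natCast_eq_zero_iff,
    Nat.cast_sub (Nat.one_le_pow _ _ (Nat.pos_of_ne_zero hb)), sub_eq_zero]
  push_cast
  rfl

section PrimitiveRoot

variable {p b : ℕ} [Fact p.Prime]

theorem padicValNat_pow_pred_sub_one (hbp : b.Coprime p)
    (hroot : orderOf (b : ZMod (p ^ 2)) = φ (p ^ 2)) :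
    padicValNat p (b ^ (p - 1) - 1) = 1 := by
  have hp := (Fact.out : p.Prime)
  have hpb : ¬ p ∣ b := hp.coprime_iff_not_dvd.mp hbp.symm
  have hb : b ≠ 0 := by rintro rfl; exact hpb (dvd_zero p)
  have hdvd : p ^ 1 ∣ b ^ (p - 1) - 1 := by
    rw [pow_one, ← orderOf_natCast_zmod_dvd_iff hb]
    exact ZMod.orderOf_dvd_card_sub_one ((ZMod.natCast_eq_zero_iff b p).not.mpr hpb)
  have hndvd : ¬ p ^ 2 ∣ b ^ (p - 1) - 1 := by
    rw [← orderOf_natCast_zmod_dvd_iff hb, hroot, Nat.totient_prime_pow_succ hp 1, pow_one]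
    intro h
    have := Nat.le_of_dvd (Nat.sub_pos_of_lt hp.one_lt) h
    nlinarith [hp.two_le, Nat.sub_pos_of_lt hp.one_lt]
  rw [padicValNat_dvd_iff] at hdvd hndvd
  omega

theorem padicValNat_pow_pred_mul_pow_sub_one (hpodd : Odd p) (hbp : b.Coprime p)
    (hroot : orderOf (b : ZMod (p ^ 2)) = φ (p ^ 2)) (s : ℕ) :
    padicValNat p (b ^ ((p - 1) * p ^ s) - 1) = s + 1 := by
  have hp := (Fact.out : p.Prime)
  have hval := padicValNat_pow_pred_sub_one hbp hroot
  have hpos : 1 < b ^ (p - 1) := by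
    by_contra h
    simp [Nat.sub_eq_zero_of_le (not_lt.mp h)] at hval
  have hdvd : p ∣ b ^ (p - 1) - 1 := dvd_of_one_le_padicValNat hval.ge
  have hndvd : ¬ p ∣ b ^ (p - 1) :=
    fun h => hp.coprime_iff_not_dvd.mp hbp.symm (hp.dvd_of_dvd_pow h)
  have hLTE := padicValNat.pow_sub_pow hpodd hpos hdvd hndvd (pow_ne_zero s hp.ne_zero)
  rw [one_pow] at hLTE
  rw [pow_mul, hLTE, hval, padicValNat.prime_pow, add_comm]

theorem orderOf_natCast_zmod_prime_pow (hpodd : Odd p) (hbp : b.Coprime p)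
    (hroot1 : orderOf (b : ZMod p) = φ p) (hroot2 : orderOf (b : ZMod (p ^ 2)) = φ (p ^ 2))
    {m : ℕ} (hm : m ≠ 0) :
    orderOf (b : ZMod (p ^ m)) = φ (p ^ m) := by
  have hp := (Fact.out : p.Prime)
  have hb : b ≠ 0 := by rintro rfl; exact hp.one_lt.ne' (Nat.coprime_zero_left _ |>.mp hbp)
  set d := orderOf (b : ZMod (p ^ m))
  have htot : φ (p ^ m) = (p - 1) * p ^ (m - 1) := by
    rw [Nat.totient_prime_pow hp (Nat.pos_of_ne_zero hm), mul_comm]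
  have hd_dvd : d ∣ (p - 1) * p ^ (m - 1) := by
    rw [← htot, orderOf_natCast_zmod_dvd_iff hb,
      ← Nat.modEq_iff_dvd' (Nat.one_le_pow _ _ (Nat.pos_of_ne_zero hb))]
    exact (Nat.ModEq.pow_totient (hbp.pow_right m)).symm
  have hpm_dvd : p ^ m ∣ b ^ d - 1 := (orderOf_natCast_zmod_dvd_iff hb).mp dvd_rfl
  obtain ⟨e, he⟩ : p - 1 ∣ d := by
    rw [← Nat.totient_prime hp, ← hroot1, orderOf_natCast_zmod_dvd_iff hb]
    exact (dvd_pow_self p hm).trans hpm_dvd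
  obtain ⟨s, hs, rfl⟩ : ∃ s ≤ m - 1, e = p ^ s := (Nat.dvd_prime_pow hp).mp
    (Nat.dvd_of_mul_dvd_mul_left (Nat.sub_pos_of_lt hp.one_lt) (he ▸ hd_dvd))
  have hval := padicValNat_pow_pred_mul_pow_sub_one hpodd hbp hroot2 s
  rw [padicValNat_dvd_iff, he, hval] at hpm_dvd
  have hsm : s = m - 1 := by
    rcases hpm_dvd with h | h
    · simp [h] at hval
    · omega
  rw [htot, he, hsm]

end PrimitiveRoot
section MulPowMod

variable {n a b : ℕ}

theorem injOn_mul_pow_mod (ha : a.Coprime n) (hord : orderOf (b : ZMod n) = φ n) :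
    Set.InjOn (fun j => a * b ^ j % n) (range (φ n)) := by
  intro i hi j hj h
  have hcast : (a : ZMod n) * b ^ i = a * b ^ j := by
    simpa using congrArg (Nat.cast : ℕ → ZMod n) h
  rw [coe_range, ← hord] at hi hj
  exact pow_injOn_Iio_orderOf hi hj (((ZMod.isUnit_iff_coprime a n).mpr ha).mul_left_cancel hcast)

theorem image_mul_pow_mod_range_totient (ha : a.Coprime n) (hb : b.Coprime n)
    (hord : orderOf (b : ZMod n) = φ n) :
    (range (φ n)).image (fun j => a * b ^ j % n) = {r ∈ range n | n.Coprime r} := by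
  apply eq_of_subset_of_card_le
  · intro r hr
    obtain ⟨j, hj, rfl⟩ := mem_image.mp hr
    have hn : n ≠ 0 := by rintro rfl; simp at hj
    rw [mem_filter, mem_range, Nat.coprime_comm, ZMod.coprime_mod_iff_coprime]
    exact ⟨Nat.mod_lt _ (Nat.pos_of_ne_zero hn), ha.mul_left (hb.pow_left j)⟩
  · rw [card_image_of_injOn (injOn_mul_pow_mod ha hord), ← Nat.totient_eq_card_coprime,
      card_range]

theorem card_filter_mul_pow_mod (ha : a.Coprime n) (hb : b.Coprime n)
    (hord : orderOf (b : ZMod n) = φ n) (P : ℕ → Prop) [DecidablePred P] :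
    #{j ∈ range (φ n) | P (a * b ^ j % n)} = #{r ∈ range n | n.Coprime r ∧ P r} := by
  rw [← filter_filter, ← image_mul_pow_mod_range_totient ha hb hord, filter_image,
    card_image_of_injOn ((injOn_mul_pow_mod ha hord).mono (filter_subset _ _))]

end MulPowMod

theorem card_filter_Icc_one_eq_card_filter_range (n : ℕ) (P : ℕ → Prop) [DecidablePred P] :
    #{j ∈ Icc 1 n | P j} = #{i ∈ range n | P (i + 1)} := by
  apply card_nbij' (· - 1) (· + 1) <;> intro j hj <;> simp_all; omega

theorem card_filter_Ioc_not_dvd (N p : ℕ) : #{r ∈ Ioc 0 N | ¬ p ∣ r} = N - N / p := by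
  have := card_filter_add_card_filter_not (s := Ioc 0 N) (p ∣ ·)
  rw [Nat.Ioc_filter_dvd_card_eq_div, Nat.card_Ioc] at this
  omega

theorem filter_range_coprime_mul_lt_prime_pow {p m b : ℕ} (hp : p.Prime) (hm : m ≠ 0)
    (hb : 0 < b) (hbp : b.Coprime p) :
    {r ∈ range (p ^ m) | (p ^ m).Coprime r ∧ r * b < p ^ m} =
      {r ∈ Ioc 0 (p ^ m / b) | ¬ p ∣ r} := by
  ext r
  simp only [mem_filter, mem_range, mem_Ioc, Nat.coprime_pow_left_iff (Nat.pos_of_ne_zero hm),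
    hp.coprime_iff_not_dvd, Nat.le_div_iff_mul_le hb]
  constructor
  · rintro ⟨-, hpr, hlt⟩
    exact ⟨⟨Nat.pos_of_ne_zero (by rintro rfl; exact hpr (dvd_zero p)), hlt.le⟩, hpr⟩
  · rintro ⟨⟨-, hle⟩, hpr⟩
    have hne : r * b ≠ p ^ m := fun h => (hp.coprime_iff_not_dvd.mp hbp.symm)
      ((hp.dvd_mul.mp (h ▸ dvd_pow_self p hm)).resolve_left hpr)
    have hlt := lt_of_le_of_ne hle hne
    exact ⟨lt_of_le_of_lt (Nat.le_mul_of_pos_right r hb) hlt, hpr, hlt⟩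

theorem pow_div_div_self {p m b : ℕ} (hp : 0 < p) (hm : m ≠ 0) :
    p ^ m / b / p = p ^ (m - 1) / b := by
  rw [Nat.div_right_comm, ← Nat.pow_div (Nat.one_le_iff_ne_zero.mpr hm) hp, pow_one]

theorem stmt9_general (p m b a : ℕ) (hm : 1 ≤ m) (hp : p.Prime) (hpodd : Odd p)
    (hb : 2 ≤ b) (hbp : Nat.Coprime b p)
    (hroot1 : orderOf (b : ZMod p) = Nat.totient p)
    (hroot2 : orderOf (b : ZMod (p ^ 2)) = Nat.totient (p ^ 2))
    (hap : Nat.Coprime a p)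
    (q : ℕ → ℕ)
    (hq : ∀ i, 1 ≤ i → q i = (a * b ^ (i - 1) % p ^ m) * b / p ^ m) :
    ((Finset.Icc 1 (Nat.totient (p ^ m))).filter (fun j => q j = 0)).card =
      p ^ m / b - p ^ (m - 1) / b := by
  have : Fact p.Prime := ⟨hp⟩
  have hm0 : m ≠ 0 := by omega
  have hord := orderOf_natCast_zmod_prime_pow hpodd hbp hroot1 hroot2 hm0
  calc #{j ∈ Icc 1 (φ (p ^ m)) | q j = 0}
      = #{i ∈ range (φ (p ^ m)) | a * b ^ i % p ^ m * b < p ^ m} := by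
        simp_rw [card_filter_Icc_one_eq_card_filter_range, hq _ (Nat.le_add_left 1 _),
          Nat.add_sub_cancel, Nat.div_eq_zero_iff_lt (pow_pos hp.pos m)]
    _ = #{r ∈ range (p ^ m) | (p ^ m).Coprime r ∧ r * b < p ^ m} :=
        card_filter_mul_pow_mod (hap.pow_right m) (hbp.pow_right m) hord (· * b < p ^ m)
    _ = p ^ m / b - p ^ (m - 1) / b := by
        rw [filter_range_coprime_mul_lt_prime_pow hp hm0 (by omega) hbp, card_filter_Ioc_not_dvd,
          pow_div_div_self hp.pos hm0]

theorem stmt9 (p m b a : ℕ) (hm : 1 ≤ m) (hp : p.Prime) (hpodd : Odd p)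
    (hb : 2 ≤ b) (hbp : Nat.Coprime b p)
    (hroot1 : orderOf (b : ZMod p) = Nat.totient p)
    (hroot2 : orderOf (b : ZMod (p ^ 2)) = Nat.totient (p ^ 2))
    (ha1 : 1 ≤ a) (ha2 : a < p ^ m) (hap : Nat.Coprime a p)
    (q : ℕ → ℕ)
    (hq : ∀ i, 1 ≤ i → q i = (a * b ^ (i - 1) % p ^ m) * b / p ^ m) :
    ((Finset.Icc 1 (Nat.totient (p ^ m))).filter (fun j => q j = 0)).card =
      p ^ m / b - p ^ (m - 1) / b :=
  stmt9_general p m b a hm hp hpodd hb hbp hroot1 hroot2 hap q hq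
end

section
/- Let m ≥ 1 be an integer, p an odd prime, and b ≥ 2 an integer coprime to p that is a primitive root modulo p and modulo p². Let a be an integer with 1 ≤ a < p^m and gcd(a,p)=1, and let q_i be the digits given by the base-b algorithm for a/p^m. Then the sequence (q_i)_{i≥1} is periodic with period φ(p^m) (that is, q_{i+φ(p^m)} = q_i for all i ≥ 1), and φ(p^m) is the minimal period: for every t with 0 < t < φ(p^m) there exists i ≥ 1 with q_{i+t} ≠ q_i. -/
/-!
Since `b` is a primitive root modulo `p` and `p²`, we have `b ^ (p - 1) = 1 + p c` with `p ∤ c`,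
and `1 + p c` has order `p ^ (m - 1)` modulo `p ^ m`; hence `b` has order `φ(p ^ m)` modulo
`n = p ^ m`.
The digits of `a / n` are invariant under a shift by `t` exactly when the remainders
`r_i = a b ^ i mod n` are: the differences `r_{i+t} - r_i` get multiplied by `b` at each step while
staying below `n` in absolute value, so they vanish. As `a` is a unit modulo `n`, this happens iff
`b ^ t ≡ 1 [MOD n]`, i.e. iff the order of `b` modulo `n` divides `t`.
-/

open Nat

section PrimitiveRootLift

variable {p b : ℕ}

lemma exists_pow_sub_one_eq_one_add_mul (hp : p.Prime)
    (h1 : orderOf (b : ZMod p) = φ p) (h2 : orderOf (b : ZMod (p ^ 2)) = φ (p ^ 2)) :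
    ∃ c : ℤ, (b : ℤ) ^ (p - 1) = 1 + p * c ∧ ¬ (p : ℤ) ∣ c := by
  have hfermat : (b : ZMod p) ^ (p - 1) = 1 := by
    rw [← totient_prime hp, ← h1, pow_orderOf_eq_one]
  obtain ⟨c, hc⟩ : (p : ℤ) ∣ (b : ℤ) ^ (p - 1) - 1 :=
    (ZMod.intCast_eq_intCast_iff_dvd_sub 1 _ p).mp (by push_cast; exact hfermat.symm)
  refine ⟨c, by linear_combination hc, ?_⟩
  rintro ⟨e, rfl⟩
  have hsq : (b : ZMod (p ^ 2)) ^ (p - 1) = 1 := by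
    have := (ZMod.intCast_eq_intCast_iff_dvd_sub 1 ((b : ℤ) ^ (p - 1)) (p ^ 2)).mpr
      ⟨e, by rw [hc]; push_cast; ring⟩
    push_cast at this
    exact this.symm
  have hdvd := orderOf_dvd_of_pow_eq_one hsq
  rw [h2, totient_prime_pow_succ hp, pow_one] at hdvd
  have hp1 : 0 < p - 1 := by have := hp.two_le; omega
  exact (lt_mul_left hp1 hp.one_lt).not_ge (Nat.le_of_dvd hp1 hdvd)

theorem orderOf_natCast_zmod_prime_pow_s10 (hp : p.Prime) (hp2 : p ≠ 2)
    (h1 : orderOf (b : ZMod p) = φ p) (h2 : orderOf (b : ZMod (p ^ 2)) = φ (p ^ 2)) (k : ℕ) :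
    orderOf (b : ZMod (p ^ k)) = φ (p ^ k) := by
  rcases k with _ | n
  · rw [pow_zero, totient_one]
    exact orderOf_eq_one_iff.mpr (Subsingleton.elim _ _)
  have hdvd : p - 1 ∣ orderOf (b : ZMod (p ^ (n + 1))) := by
    have := orderOf_map_dvd (ZMod.castHom (dvd_pow_self p n.add_one_ne_zero) (ZMod p)).toMonoidHom
      (b : ZMod (p ^ (n + 1)))
    rwa [RingHom.toMonoidHom_eq_coe, MonoidHom.coe_coe, map_natCast, h1, totient_prime hp] at this
  obtain ⟨c, hc, hpc⟩ := exists_pow_sub_one_eq_one_add_mul hp h1 h2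
  have hpow : (b : ZMod (p ^ (n + 1))) ^ (p - 1) = 1 + p * c := by
    exact_mod_cast congrArg (Int.cast : ℤ → ZMod (p ^ (n + 1))) hc
  have hord := ZMod.orderOf_one_add_mul_prime hp hp2 c hpc n
  rw [← hpow, orderOf_pow_of_dvd (by have := hp.two_le; omega) hdvd] at hord
  rw [totient_prime_pow_succ hp, ← hord, Nat.div_mul_cancel hdvd]

end PrimitiveRootLift

lemma Int.eq_zero_of_abs_pow_mul_lt {b x : ℤ} {n : ℕ} (hb : 2 ≤ b) (h : |b ^ n * x| < n) :
    x = 0 := by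
  by_contra hx
  have hpow : (n : ℤ) < b ^ n :=
    calc (n : ℤ) < 2 ^ n := by exact_mod_cast Nat.lt_two_pow_self
      _ ≤ b ^ n := pow_le_pow_left₀ (by norm_num) hb n
  have : b ^ n ≤ |b ^ n * x| := by
    rw [abs_mul, abs_of_pos (by positivity)]
    exact le_mul_of_one_le_right (by positivity) (Int.one_le_abs hx)
  omega

namespace BaseExpansion

def remainder (n b a i : ℕ) : ℕ := a * b ^ i % n

/-- `digit n b a i` is the digit `q_{i+1}` of the base-`b` algorithm for `a / n`. -/
def digit (n b a i : ℕ) : ℕ := remainder n b a i * b / n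

variable {n b a : ℕ}

lemma remainder_lt (hn : 0 < n) (i : ℕ) : remainder n b a i < n := Nat.mod_lt _ hn

lemma remainder_mul_eq (i : ℕ) :
    remainder n b a i * b = n * digit n b a i + remainder n b a (i + 1) := by
  have hsucc : remainder n b a (i + 1) = remainder n b a i * b % n := by
    rw [remainder, remainder, Nat.mod_mul_mod, pow_succ, mul_assoc]
  rw [hsucc, digit, Nat.div_add_mod]

lemma remainder_add_eq_of_pow_eq_one {t : ℕ} (h : (b : ZMod n) ^ t = 1) (i : ℕ) :
    remainder n b a (i + t) = remainder n b a i := by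
  rw [remainder, remainder, ← ZMod.natCast_eq_natCast_iff']
  push_cast
  rw [pow_add, h, mul_one]

lemma remainder_eq_of_digit_add_eq (hn : 0 < n) (hb : 2 ≤ b) {t : ℕ}
    (h : ∀ i, digit n b a (i + t) = digit n b a i) :
    remainder n b a t = remainder n b a 0 := by
  set D : ℕ → ℤ := fun i ↦ (remainder n b a (i + t) : ℤ) - remainder n b a i
  have hstep : ∀ i, D (i + 1) = b * D i := by
    intro i
    have h₁ : (remainder n b a (i + t) * b : ℤ) =
        n * digit n b a i + remainder n b a (i + 1 + t) := by
      rw [← h i, add_right_comm]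
      exact_mod_cast remainder_mul_eq (i + t)
    have h₂ : (remainder n b a i * b : ℤ) = n * digit n b a i + remainder n b a (i + 1) := by
      exact_mod_cast remainder_mul_eq i
    linear_combination h₂ - h₁
  have hpow : ∀ i, D i = b ^ i * D 0 := by
    intro i
    induction i with
    | zero => simp
    | succ i ih => rw [hstep, ih]; ring
  have hbound : |D n| < n := by
    have := remainder_lt (b := b) (a := a) hn (n + t)
    have := remainder_lt (b := b) (a := a) hn n
    simp only [D, abs_lt]
    omega
  have := Int.eq_zero_of_abs_pow_mul_lt (by exact_mod_cast hb) (hpow n ▸ hbound)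
  simp only [D, zero_add] at this
  omega

theorem digit_add_eq_iff (hn : 0 < n) (hb : 2 ≤ b) (ha : a.Coprime n) (t : ℕ) :
    (∀ i, digit n b a (i + t) = digit n b a i) ↔ orderOf (b : ZMod n) ∣ t := by
  rw [orderOf_dvd_iff_pow_eq_one]
  constructor
  · intro h
    have hrem := remainder_eq_of_digit_add_eq hn hb h
    rw [remainder, remainder, ← ZMod.natCast_eq_natCast_iff'] at hrem
    push_cast at hrem
    exact ((ZMod.isUnit_iff_coprime a n).mpr ha).mul_left_cancel (by rw [hrem, pow_zero])
  · intro h i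
    rw [digit, digit, remainder_add_eq_of_pow_eq_one h]

end BaseExpansion

open BaseExpansion in
theorem stmt10_general (p m b a : ℕ) (hp : p.Prime) (hpodd : Odd p)
    (hb : 2 ≤ b)
    (hroot1 : orderOf (b : ZMod p) = Nat.totient p)
    (hroot2 : orderOf (b : ZMod (p ^ 2)) = Nat.totient (p ^ 2))
    (hap : Nat.Coprime a p)
    (q : ℕ → ℕ)
    (hq : ∀ i, 1 ≤ i → q i = (a * b ^ (i - 1) % p ^ m) * b / p ^ m) :
    (∀ i, 1 ≤ i → q (i + Nat.totient (p ^ m)) = q i) ∧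
    (∀ t, 0 < t → t < Nat.totient (p ^ m) → ∃ i, 1 ≤ i ∧ q (i + t) ≠ q i) := by
  have hq' : ∀ i, q (i + 1) = digit (p ^ m) b a i := fun i ↦ hq (i + 1) (by omega)
  have hp2 : p ≠ 2 := by
    rintro rfl
    exact absurd hpodd (by decide)
  have hperiod := digit_add_eq_iff (pow_pos hp.pos m) hb (hap.pow_right m)
  rw [orderOf_natCast_zmod_prime_pow_s10 hp hp2 hroot1 hroot2] at hperiod
  constructor
  · rintro (_ | i) hi
    · omega
    · rw [add_right_comm, hq', hq', (hperiod _).mpr dvd_rfl]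
  · intro t ht htot
    by_contra! h
    have hdvd := (hperiod t).mp fun i ↦ by
      rw [← hq', ← hq', add_right_comm, h (i + 1) (by omega)]
    exact htot.not_ge (Nat.le_of_dvd ht hdvd)

theorem stmt10 (p m b a : ℕ) (hm : 1 ≤ m) (hp : p.Prime) (hpodd : Odd p)
    (hb : 2 ≤ b) (hbp : Nat.Coprime b p)
    (hroot1 : orderOf (b : ZMod p) = Nat.totient p)
    (hroot2 : orderOf (b : ZMod (p ^ 2)) = Nat.totient (p ^ 2))
    (ha1 : 1 ≤ a) (ha2 : a < p ^ m) (hap : Nat.Coprime a p)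
    (q : ℕ → ℕ)
    (hq : ∀ i, 1 ≤ i → q i = (a * b ^ (i - 1) % p ^ m) * b / p ^ m) :
    (∀ i, 1 ≤ i → q (i + Nat.totient (p ^ m)) = q i) ∧
    (∀ t, 0 < t → t < Nat.totient (p ^ m) → ∃ i, 1 ≤ i ∧ q (i + t) ≠ q i) :=
  stmt10_general p m b a hp hpodd hb hroot1 hroot2 hap q hq
end

section
/- Let c ≥ 2 be an integer and define F_c(x) := ∑_{n≥1} x^{c^n}/c^n for complex x with |x| < 1. Then F_c does not agree with any rational function: there do not exist polynomials A(x), B(x) ∈ ℂ[x] with B not identically zero such that B(x)·F_c(x) = A(x) for all complex x with |x| < 1. -/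
/-!
If `B · F_c = A` on the unit disc, the identity theorem turns this into the identity `B · F = A`
of formal power series, where `F = ∑_{n ≥ 1} X^(c^n) / c^n`. Let `m` be the order of `B`. Once
the gap `c^(n+1) - c^n` exceeds `deg B`, the coefficient of `X^(c^(n+1) + m)` in `B · F` is
`b_m / c^(n+1) ≠ 0`: every other contribution `b_i X^i · X^j` with `m < i ≤ deg B` needs
`c^n < j < c^(n+1)`, where `F` has no terms. For `c^(n+1) > deg A` this contradicts `B · F = A`.
-/

/-- The Mahler-type function `F_c(x) = ∑_{n≥1} x^(c^n)/c^n`. -/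
noncomputable def Fc (c : ℕ) (x : ℂ) : ℂ :=
  ∑' n : ℕ, x ^ (c ^ (n + 1)) / (c : ℂ) ^ (n + 1)

open PowerSeries Topology Finset

namespace PowerSeries

section CauchyProduct

variable {R : Type*} [NormedCommRing R] {φ ψ : R⟦X⟧} {x : R}

theorem coeff_mul_mul_pow (n : ℕ) (φ ψ : R⟦X⟧) (x : R) :
    coeff n (φ * ψ) * x ^ n =
      ∑ kl ∈ antidiagonal n, coeff kl.1 φ * x ^ kl.1 * (coeff kl.2 ψ * x ^ kl.2) := by
  rw [coeff_mul, Finset.sum_mul]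
  refine Finset.sum_congr rfl fun kl hkl => ?_
  rw [← HasAntidiagonal.mem_antidiagonal.1 hkl, pow_add]
  ring

theorem summable_norm_coeff_mul_mul_pow (hφ : Summable fun n => ‖coeff n φ * x ^ n‖)
    (hψ : Summable fun n => ‖coeff n ψ * x ^ n‖) :
    Summable fun n => ‖coeff n (φ * ψ) * x ^ n‖ := by
  simpa only [coeff_mul_mul_pow] using summable_norm_sum_mul_antidiagonal_of_summable_norm hφ hψ

theorem tsum_coeff_mul_mul_pow [CompleteSpace R] (hφ : Summable fun n => ‖coeff n φ * x ^ n‖)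
    (hψ : Summable fun n => ‖coeff n ψ * x ^ n‖) :
    ∑' n, coeff n (φ * ψ) * x ^ n =
      (∑' n, coeff n φ * x ^ n) * ∑' n, coeff n ψ * x ^ n := by
  simp only [coeff_mul_mul_pow, tsum_mul_tsum_eq_tsum_sum_antidiagonal_of_summable_norm hφ hψ]

end CauchyProduct

theorem eq_of_eventually_tsum_eq {𝕜 : Type*} [NontriviallyNormedField 𝕜] [CompleteSpace 𝕜]
    {φ ψ : 𝕜⟦X⟧} {x₀ : 𝕜} (hx₀ : x₀ ≠ 0)
    (hφ : Summable fun n => ‖coeff n φ * x₀ ^ n‖) (hψ : Summable fun n => ‖coeff n ψ * x₀ ^ n‖)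
    (h : ∀ᶠ x in 𝓝 0, ∑' n, coeff n φ * x ^ n = ∑' n, coeff n ψ * x ^ n) :
    φ = ψ := by
  let series (χ : 𝕜⟦X⟧) := FormalMultilinearSeries.ofScalars 𝕜 fun n => coeff n χ
  have hasFPowerSeriesAt (χ : 𝕜⟦X⟧) (hχ : Summable fun n => ‖coeff n χ * x₀ ^ n‖) :
      HasFPowerSeriesAt (fun x => ∑' n, coeff n χ * x ^ n) (series χ) 0 := by
    have hr : 0 < (series χ).radius := by
      refine lt_of_lt_of_le ?_ ((series χ).le_radius_of_summable_norm (r := ‖x₀‖₊) ?_)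
      · simpa using hx₀
      · simpa [series, norm_mul] using hχ
    have h := ((series χ).hasFPowerSeriesOnBall hr).hasFPowerSeriesAt
    rwa [← FormalMultilinearSeries.ofScalarsSum,
      FormalMultilinearSeries.ofScalarsSum_eq_tsum] at h
  have hseries := (hasFPowerSeriesAt φ hφ).eq_formalMultilinearSeries_of_eventually
    (hasFPowerSeriesAt ψ hψ) h
  ext n
  simpa [series] using congr($hseries n fun _ => 1)

end PowerSeries

namespace Polynomial

variable {R : Type*} [NormedCommRing R] (p : Polynomial R) (x : R)

theorem summable_norm_coeff_coe_mul_pow :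
    Summable fun n => ‖PowerSeries.coeff n (p : R⟦X⟧) * x ^ n‖ :=
  summable_of_ne_finset_zero (s := Finset.range (p.natDegree + 1)) fun n hn => by
    rw [Polynomial.coeff_coe, p.coeff_eq_zero_of_natDegree_lt (by simpa using hn), zero_mul,
      norm_zero]

theorem tsum_coeff_coe_mul_pow :
    ∑' n, PowerSeries.coeff n (p : R⟦X⟧) * x ^ n = p.eval x := by
  rw [p.eval_eq_sum_range, tsum_eq_sum (s := Finset.range (p.natDegree + 1))]
  · simp only [Polynomial.coeff_coe]
  · intro n hn
    rw [Polynomial.coeff_coe, p.coeff_eq_zero_of_natDegree_lt (by simpa using hn), zero_mul]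

end Polynomial

theorem Nat.exists_add_pow_lt_pow_succ {c : ℕ} (hc : 2 ≤ c) (d : ℕ) :
    ∃ n, d + c ^ n < c ^ (n + 1) := by
  refine ⟨d, ?_⟩
  have hpow : c ^ d * 2 ≤ c ^ (d + 1) := by
    rw [pow_succ]
    exact Nat.mul_le_mul_left _ hc
  have hlt := Nat.lt_pow_self (n := d) hc
  omega

noncomputable def lacunarySeries (c : ℕ) : ℂ⟦X⟧ :=
  PowerSeries.mk <| (Set.range fun n => c ^ (n + 1)).indicator fun k => (k : ℂ)⁻¹

section LacunarySeries

variable {c : ℕ}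

theorem coeff_lacunarySeries (k : ℕ) :
    coeff k (lacunarySeries c) =
      (Set.range fun n => c ^ (n + 1)).indicator (fun k => (k : ℂ)⁻¹) k :=
  coeff_mk _ _

theorem norm_coeff_lacunarySeries_le_one (k : ℕ) : ‖coeff k (lacunarySeries c)‖ ≤ 1 := by
  rw [coeff_lacunarySeries]
  refine (norm_indicator_le_norm_self _ k).trans ?_
  simpa using Nat.cast_inv_le_one (α := ℝ) k

theorem summable_norm_coeff_lacunarySeries_mul_pow {x : ℂ} (hx : ‖x‖ < 1) :
    Summable fun k => ‖coeff k (lacunarySeries c) * x ^ k‖ := by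
  refine (summable_geometric_of_lt_one (norm_nonneg x) hx).of_nonneg_of_le
    (fun k => norm_nonneg _) fun k => ?_
  rw [norm_mul, norm_pow]
  exact mul_le_of_le_one_left (by positivity) (norm_coeff_lacunarySeries_le_one k)

theorem Fc_eq_tsum_coeff_lacunarySeries_mul_pow (hc : 1 < c) (x : ℂ) :
    Fc c x = ∑' k, coeff k (lacunarySeries c) * x ^ k := by
  have hinj : Function.Injective fun n => c ^ (n + 1) :=
    fun m n h => Nat.succ_injective (Nat.pow_right_injective hc h)
  rw [← hinj.tsum_eq ((Function.support_mul_subset_left _ _).trans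
    (by simpa only [coeff_lacunarySeries] using Set.support_indicator_subset))]
  refine tsum_congr fun n => ?_
  rw [coeff_lacunarySeries, Set.indicator_of_mem (Set.mem_range_self n)]
  push_cast
  ring

theorem coeff_lacunarySeries_eq_zero (hc : 1 < c) {n k : ℕ} (hk₁ : c ^ n < k)
    (hk₂ : k < c ^ (n + 1)) : coeff k (lacunarySeries c) = 0 := by
  rw [coeff_lacunarySeries, Set.indicator_of_notMem]
  rintro ⟨m, rfl⟩
  rw [Nat.pow_lt_pow_iff_right hc] at hk₁ hk₂
  omega

theorem coeff_coe_mul_lacunarySeries (hc : 1 < c) (B : Polynomial ℂ) {n : ℕ}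
    (hn : B.natDegree + c ^ n < c ^ (n + 1)) :
    coeff (c ^ (n + 1) + B.natTrailingDegree) ((B : ℂ⟦X⟧) * lacunarySeries c) =
      B.trailingCoeff * ((c ^ (n + 1) : ℕ) : ℂ)⁻¹ := by
  rw [coeff_mul, Finset.sum_eq_single_of_mem (B.natTrailingDegree, c ^ (n + 1))
    (by simp [add_comm])]
  · rw [Polynomial.coeff_coe, coeff_lacunarySeries,
      Set.indicator_of_mem (Set.mem_range_self n), Polynomial.trailingCoeff]
  rintro ⟨i, j⟩ hij hne
  rw [HasAntidiagonal.mem_antidiagonal] at hij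
  dsimp only at hij ⊢
  rw [Polynomial.coeff_coe]
  rcases lt_trichotomy i B.natTrailingDegree with hi | rfl | hi
  · rw [Polynomial.coeff_eq_zero_of_lt_natTrailingDegree hi, zero_mul]
  · exact absurd (by rw [Prod.mk.injEq]; omega) hne
  rcases lt_or_ge B.natDegree i with hi' | hi'
  · rw [Polynomial.coeff_eq_zero_of_natDegree_lt hi', zero_mul]
  · rw [coeff_lacunarySeries_eq_zero hc (n := n) (by omega) (by omega), mul_zero]

end LacunarySeries

theorem stmt16 (c : ℕ) (hc : 2 ≤ c) :
    ¬ ∃ A B : Polynomial ℂ, B ≠ 0 ∧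
      ∀ x : ℂ, ‖x‖ < 1 → B.eval x * Fc c x = A.eval x := by
  rintro ⟨A, B, hB, hAB⟩
  have hBL : (B : ℂ⟦X⟧) * lacunarySeries c = A := by
    have hL {x : ℂ} (hx : ‖x‖ < 1) := summable_norm_coeff_lacunarySeries_mul_pow (c := c) hx
    refine PowerSeries.eq_of_eventually_tsum_eq (x₀ := 1 / 2) (by norm_num)
      (summable_norm_coeff_mul_mul_pow (B.summable_norm_coeff_coe_mul_pow _) (hL (by norm_num)))
      (A.summable_norm_coeff_coe_mul_pow _) ?_
    filter_upwards [Metric.ball_mem_nhds (0 : ℂ) one_pos] with x hx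
    rw [mem_ball_zero_iff] at hx
    rw [tsum_coeff_mul_mul_pow (B.summable_norm_coeff_coe_mul_pow x) (hL hx),
      B.tsum_coeff_coe_mul_pow, A.tsum_coeff_coe_mul_pow,
      ← Fc_eq_tsum_coeff_lacunarySeries_mul_pow hc, hAB x hx]
  obtain ⟨n, hn⟩ := Nat.exists_add_pow_lt_pow_succ hc (A.natDegree + B.natDegree)
  have hcoeff := congr(coeff (c ^ (n + 1) + B.natTrailingDegree) $hBL)
  rw [coeff_coe_mul_lacunarySeries hc B (by omega), Polynomial.coeff_coe,
    A.coeff_eq_zero_of_natDegree_lt (by omega)] at hcoeff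
  have hc0 : c ≠ 0 := by omega
  simp [hB, hc0] at hcoeff
end

section
/- Let n ≥ 1 be an integer and let q_1, q_2, …, q_{φ(5^n)} be the digits produced by the base-3 algorithm for 1/5^n. Then: the number of i ≤ φ(5^n) with q_i = 0 equals 4·⌊5^n/15⌋ + 1 if n is odd and 4·⌊5^n/15⌋ + 3 if n is even; the number of i ≤ φ(5^n) with q_i = 1 equals 4·⌊5^n/15⌋ + 2 for all n; and the number of i ≤ φ(5^n) with q_i = 2 equals 4·⌊5^n/15⌋ + 1 if n is odd and 4·⌊5^n/15⌋ + 3 if n is even. -/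
/-!
Since `3` generates `(ZMod (5 ^ n))ˣ`, the remainders `rᵢ = 3 ^ (i - 1) mod 5 ^ n`,
`1 ≤ i ≤ φ (5 ^ n)`, run exactly once through the residues `0 ≤ r < 5 ^ n` prime to `5`. The digit
`qᵢ = ⌊3 rᵢ / 5 ^ n⌋` is `d` exactly when `rᵢ` lies in the `d`-th third `[d 5ⁿ / 3, (d + 1) 5ⁿ / 3)`
of `[0, 5 ^ n)`, so each count is the number of non-multiples of `5` in an interval, which is
read off from `5 ^ n mod 15 ∈ {5, 10}`.
-/

open Finset Nat

section PrimitiveRoot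

variable {a m : ℕ}

lemma coprime_of_orderOf_eq_totient (hm : 0 < m) (h : orderOf (a : ZMod m) = φ m) :
    a.Coprime m :=
  (ZMod.isUnit_iff_coprime a m).1 (orderOf_pos_iff.1 (h ▸ totient_pos.2 hm)).isUnit

lemma injOn_pow_mod_Icc (h : orderOf (a : ZMod m) = φ m) :
    Set.InjOn (fun i => a ^ (i - 1) % m) (Icc 1 (φ m)) := by
  intro i hi j hj hij
  simp only [coe_Icc, Set.mem_Icc] at hi hj
  have hpow : (a : ZMod m) ^ (i - 1) = (a : ZMod m) ^ (j - 1) := by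
    simpa only [← Nat.cast_pow, ZMod.natCast_eq_natCast_iff'] using hij
  have hexp : i - 1 = j - 1 := pow_injOn_Iio_orderOf (x := (a : ZMod m))
    (by rw [Set.mem_Iio, h]; omega) (by rw [Set.mem_Iio, h]; omega) hpow
  omega

lemma image_pow_mod_Icc (hm : 0 < m) (h : orderOf (a : ZMod m) = φ m) :
    (Icc 1 (φ m)).image (fun i => a ^ (i - 1) % m) = {r ∈ range m | m.Coprime r} := by
  refine eq_of_subset_of_card_le (fun r hr => ?_) ?_
  · obtain ⟨i, -, rfl⟩ := mem_image.1 hr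
    have hcop := (coprime_of_orderOf_eq_totient hm h).pow_left (i - 1)
    exact mem_filter.2
      ⟨mem_range.2 (mod_lt _ hm), ((ZMod.coprime_mod_iff_coprime _ _).2 hcop).symm⟩
  · rw [Finset.card_image_of_injOn (injOn_pow_mod_Icc h), card_Icc, ← totient_eq_card_coprime,
      add_tsub_cancel_right]

lemma card_filter_pow_mod_Icc (hm : 0 < m) (h : orderOf (a : ZMod m) = φ m)
    (P : ℕ → Prop) [DecidablePred P] :
    #{i ∈ Icc 1 (φ m) | P (a ^ (i - 1) % m)} = #{r ∈ range m | m.Coprime r ∧ P r} := by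
  rw [← filter_filter, ← image_pow_mod_Icc hm h, filter_image,
    Finset.card_image_of_injOn ((injOn_pow_mod_Icc h).mono (coe_subset.2 (filter_subset _ _)))]

end PrimitiveRoot

theorem orderOf_three_zmod_five_pow (n : ℕ) : orderOf (3 : ZMod (5 ^ n)) = φ (5 ^ n) := by
  cases n with
  | zero =>
    show orderOf (3 : ZMod 1) = φ 1
    simp [Subsingleton.elim (3 : ZMod 1) 1]
  | succ n =>
    have : Fact (Nat.Prime 2) := ⟨prime_two⟩
    have hfive : orderOf (3 : ZMod 5) = 4 :=
      orderOf_eq_prime_pow (n := 1) (p := 2) (by decide) (by decide)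
    have hfour : 4 ∣ orderOf (3 : ZMod (5 ^ (n + 1))) := by
      have := orderOf_map_dvd (ZMod.castHom (dvd_pow_self 5 n.succ_ne_zero) (ZMod 5)).toMonoidHom 3
      rwa [RingHom.toMonoidHom_eq_coe, MonoidHom.coe_coe, map_ofNat, hfive] at this
    -- `3 ^ 4 = 1 + 5 * 16` with `5 ∤ 16`
    have hpow : orderOf ((3 : ZMod (5 ^ (n + 1))) ^ 4) = 5 ^ n := by
      rw [← ZMod.orderOf_one_add_mul_prime prime_five (by norm_num) 16 (by norm_num) n]
      norm_num
    rw [orderOf_pow_of_dvd four_ne_zero hfour] at hpow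
    rw [totient_prime_pow_succ prime_five, ← hpow, Nat.div_mul_cancel hfour]

lemma filter_range_mul_div_eq {b m d : ℕ} (hm : 0 < m) (hd : d < b) :
    {r ∈ range m | r * b / m = d} = Ico (d * m ⌈/⌉ b) ((d + 1) * m ⌈/⌉ b) := by
  have hb : 0 < b := by omega
  ext r
  simp only [mem_filter, mem_range, mem_Ico, ceilDiv_le_iff_le_mul hb, ← not_le,
    Nat.div_eq_iff hm, add_one_mul, mul_comm b r]
  have hrm : r * b < m * b → r < m := Nat.lt_of_mul_lt_mul_right
  have hdm : (d + 1) * m ≤ b * m := Nat.mul_le_mul_right m hd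
  rw [add_one_mul, mul_comm b m] at hdm
  omega

lemma filter_dvd_range_eq_map {p : ℕ} (hp : 0 < p) (N : ℕ) :
    {r ∈ range N | p ∣ r} = (range (N ⌈/⌉ p)).map ⟨(· * p), mul_left_injective₀ hp.ne'⟩ := by
  ext r
  simp only [mem_filter, mem_range, mem_map, Function.Embedding.coeFn_mk, ← not_le,
    ceilDiv_le_iff_le_mul hp]
  constructor
  · rintro ⟨hr, k, rfl⟩
    exact ⟨k, hr, mul_comm k p⟩
  · rintro ⟨k, hk, rfl⟩
    exact ⟨by rwa [mul_comm k p], dvd_mul_left p k⟩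

lemma card_filter_not_dvd_range {p : ℕ} (hp : 0 < p) (N : ℕ) :
    #{r ∈ range N | ¬p ∣ r} = N - N ⌈/⌉ p := by
  have := card_filter_add_card_filter_not (s := range N) (p ∣ ·)
  rw [filter_dvd_range_eq_map hp, card_map, card_range, card_range] at this
  omega

lemma card_filter_Ico_eq_sub (P : ℕ → Prop) [DecidablePred P] {a b : ℕ} (hab : a ≤ b) :
    #{r ∈ Ico a b | P r} = #{r ∈ range b | P r} - #{r ∈ range a | P r} := by
  have hunion : range a ∪ Ico a b = range b := by
    rw [range_eq_Ico, range_eq_Ico, Ico_union_Ico_eq_Ico (zero_le a) hab]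
  have hdisj : Disjoint (range a) (Ico a b) := by
    rw [range_eq_Ico]; exact Ico_disjoint_Ico_consecutive 0 a b
  rw [← hunion, filter_union, card_union_of_disjoint (disjoint_filter_filter hdisj),
    add_tsub_cancel_left]

lemma card_filter_not_dvd_Ico {p a b : ℕ} (hp : 0 < p) (hab : a ≤ b) :
    #{r ∈ Ico a b | ¬p ∣ r} = (b - b ⌈/⌉ p) - (a - a ⌈/⌉ p) := by
  rw [card_filter_Ico_eq_sub _ hab, card_filter_not_dvd_range hp, card_filter_not_dvd_range hp]

lemma five_pow_mod_fifteen {n : ℕ} (hn : n ≠ 0) : 5 ^ n % 15 = if Odd n then 5 else 10 := by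
  induction n with
  | zero => contradiction
  | succ n ih =>
    rcases n.eq_zero_or_pos with rfl | hpos
    · rfl
    rw [pow_succ, Nat.mul_mod, ih hpos.ne']
    by_cases h : Odd n <;> simp [h, Nat.odd_add_one]

theorem stmt19 (n : ℕ) (hn : 1 ≤ n) (q : ℕ → ℕ)
    (hq : ∀ i, 1 ≤ i → q i = (3 ^ (i - 1) % 5 ^ n) * 3 / 5 ^ n) :
    ((Finset.Icc 1 (Nat.totient (5 ^ n))).filter (fun i => q i = 0)).card =
      (if Odd n then 4 * (5 ^ n / 15) + 1 else 4 * (5 ^ n / 15) + 3) ∧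
    ((Finset.Icc 1 (Nat.totient (5 ^ n))).filter (fun i => q i = 1)).card =
      4 * (5 ^ n / 15) + 2 ∧
    ((Finset.Icc 1 (Nat.totient (5 ^ n))).filter (fun i => q i = 2)).card =
      (if Odd n then 4 * (5 ^ n / 15) + 1 else 4 * (5 ^ n / 15) + 3) := by
  have hm : 0 < 5 ^ n := by positivity
  have hord : orderOf ((3 : ℕ) : ZMod (5 ^ n)) = φ (5 ^ n) := by
    exact_mod_cast orderOf_three_zmod_five_pow n
  have hunit : ∀ r, (5 ^ n).Coprime r ↔ ¬5 ∣ r := fun r =>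
    (coprime_pow_left_iff hn 5 r).trans (prime_five.coprime_iff_not_dvd)
  have hdigit : ∀ d < 3, #{i ∈ Icc 1 (φ (5 ^ n)) | q i = d} =
      #{r ∈ Ico (d * 5 ^ n ⌈/⌉ 3) ((d + 1) * 5 ^ n ⌈/⌉ 3) | ¬5 ∣ r} := by
    intro d hd
    rw [filter_congr fun i hi => by rw [hq i (mem_Icc.1 hi).1],
      card_filter_pow_mod_Icc hm hord (· * 3 / 5 ^ n = d), ← filter_range_mul_div_eq hm hd,
      filter_filter]
    simp only [hunit, and_comm]
  have hmono : ∀ d, d * 5 ^ n ⌈/⌉ 3 ≤ (d + 1) * 5 ^ n ⌈/⌉ 3 := fun d =>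
    (gc_mul_ceilDiv three_pos).monotone_l (Nat.mul_le_mul_right _ d.le_succ)
  rw [hdigit 0 (by norm_num), hdigit 1 (by norm_num), hdigit 2 (by norm_num),
    card_filter_not_dvd_Ico (by norm_num) (hmono 0),
    card_filter_not_dvd_Ico (by norm_num) (hmono 1),
    card_filter_not_dvd_Ico (by norm_num) (hmono 2)]
  have h15 := five_pow_mod_fifteen (n := n) (by omega)
  simp only [ceilDiv_eq_add_pred_div]
  split_ifs at h15 ⊢ <;> omega
end
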